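/- arXiv:1907.08124 — 2 statements merged into one kernel-verified Lean document; each statement's English description precedes it below -/
import Mathlib

section
/- Suppose an operator T on a finite-dimensional complex vector space H of dimension d^N admits a covector ⟨S| together with commuting evaluated operators T(ξ_1),…,T(ξ_N) such that the d^N covectors ⟨S|∏_n T(ξ_n)^{h_n}, for (h_1,…,h_N) ∈ {0,…,d−1}^N, form a basis of the dual space. Then every common eigenvalue tuple (t(ξ_1),…,t(ξ_N)) of the commuting family (T(ξ_1),…,T(ξ_N)) has a one-dimensional common eigenspace; i.e., the joint spectrum is simple. -/
/-!
On a joint eigenvector `u` with eigenvalues `t`, the covector `⟨S| ∏ₙ T(ξₙ)^{hₙ}` takes the value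
`(∏ₙ t(ξₙ)^{hₙ}) ⟨S|u⟩`. Since these covectors span the dual space, which separates points, a joint
eigenvector is determined by the single number `⟨S|u⟩`; in particular `⟨S|v⟩ ≠ 0`, and
`w - (⟨S|w⟩ / ⟨S|v⟩) v` is a joint eigenvector annihilated by `⟨S|`, hence zero.
-/

namespace Module

variable {ι R M : Type*} [CommRing R] [AddCommGroup M] [Module R M]

theorem End.pow_apply_of_apply_eq_smul {f : End R M} {μ : R} {v : M} (hv : f v = μ • v)
    (k : ℕ) : (f ^ k) v = μ ^ k • v := by
  induction k with
  | zero => simp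
  | succ k ih => rw [pow_succ, End.mul_apply, hv, map_smul, ih, smul_smul, pow_succ']

theorem End.noncommProd_apply_of_apply_eq_smul (A : ι → End R M) (μ : ι → R) {v : M}
    (hv : ∀ i, A i v = μ i • v) (s : Finset ι)
    (hc : (s : Set ι).Pairwise (Function.onFun Commute A)) :
    s.noncommProd A hc v = (∏ i ∈ s, μ i) • v := by
  classical
  induction s using Finset.induction_on with
  | empty => simp
  | insert i s hi ih =>
    rw [Finset.noncommProd_insert_of_notMem _ _ _ _ hi, End.mul_apply,
      ih (hc.mono (Finset.coe_subset.mpr (Finset.subset_insert i s))), map_smul, hv,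
      smul_smul, Finset.prod_insert hi, mul_comm]

theorem eq_zero_of_forall_apply_eq_zero_of_span_eq_top [Projective R M] {B : ι → Dual R M}
    (hspan : Submodule.span R (Set.range B) = ⊤) {u : M} (hu : ∀ i, B i u = 0) : u = 0 := by
  have hle : Submodule.span R (Set.range B) ≤ LinearMap.ker (Dual.eval R M u) :=
    Submodule.span_le.mpr (by rintro _ ⟨i, rfl⟩; exact hu i)
  exact (forall_dual_apply_eq_zero_iff R u).mp fun φ => hle (hspan ▸ Submodule.mem_top)

end Module

open Module

theorem sov_basis_simple_joint_spectrum_general (d N : ℕ) (H : Type*)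
    [AddCommGroup H] [Module ℂ H]
    (T : Fin N → Module.End ℂ H)
    (hcomm : ∀ m n, Commute (T m) (T n))
    (S : Module.Dual ℂ H)
    (B : (Fin N → Fin d) → Module.Dual ℂ H)
    (hB : ∀ h : Fin N → Fin d,
      B h = S ∘ₗ Finset.univ.noncommProd (fun n => T n ^ ((h n : ℕ)))
        (fun a _ b _ _ => Commute.pow_pow (hcomm a b) _ _))
    (hspan : Submodule.span ℂ (Set.range B) = ⊤)
    (t : Fin N → ℂ) (v w : H)
    (hv : ∀ n, T n v = t n • v) (hw : ∀ n, T n w = t n • w)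
    (hv0 : v ≠ 0) :
    ∃ c : ℂ, w = c • v := by
  have hB_apply : ∀ u, (∀ n, T n u = t n • u) → ∀ h, B h u = (∏ n, t n ^ (h n : ℕ)) * S u :=
    fun u hu h => by
      have hprod := End.noncommProd_apply_of_apply_eq_smul (fun n => T n ^ (h n : ℕ))
        (fun n => t n ^ (h n : ℕ)) (fun n => End.pow_apply_of_apply_eq_smul (hu n) _) .univ
        (fun a _ b _ _ => Commute.pow_pow (hcomm a b) _ _)
      rw [hB h, LinearMap.comp_apply, hprod, map_smul, smul_eq_mul]
  have hSv : S v ≠ 0 := fun h0 =>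
    hv0 (eq_zero_of_forall_apply_eq_zero_of_span_eq_top hspan fun h => by
      rw [hB_apply v hv, h0, mul_zero])
  set c := S w / S v
  have hu : ∀ n, T n (w - c • v) = t n • (w - c • v) := fun n => by
    rw [map_sub, map_smul, hv, hw, smul_sub, smul_comm c]
  have hSu : S (w - c • v) = 0 := by
    rw [map_sub, map_smul, smul_eq_mul, div_mul_cancel₀ _ hSv, sub_self]
  refine ⟨c, sub_eq_zero.mp (eq_zero_of_forall_apply_eq_zero_of_span_eq_top hspan fun h => ?_)⟩
  rw [hB_apply _ hu, hSu, mul_zero]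

/-- Suppose `H` has dimension `d^N` and the commuting operators `T(ξ_1), …, T(ξ_N)` admit a
covector `⟨S|` such that the `d^N` covectors `⟨S| ∏_n T(ξ_n)^{h_n}`,
`(h_1,…,h_N) ∈ {0,…,d-1}^N`, form a basis of the dual space. Then every common eigenvalue
tuple of the family has a one-dimensional common eigenspace: a joint eigenvector is
determined up to scalar. -/
theorem sov_basis_simple_joint_spectrum (d N : ℕ) (H : Type*)
    [AddCommGroup H] [Module ℂ H] [FiniteDimensional ℂ H]
    (hdim : Module.finrank ℂ H = d ^ N)
    (T : Fin N → Module.End ℂ H)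
    (hcomm : ∀ m n, Commute (T m) (T n))
    (S : Module.Dual ℂ H)
    (B : (Fin N → Fin d) → Module.Dual ℂ H)
    (hB : ∀ h : Fin N → Fin d,
      B h = S ∘ₗ Finset.univ.noncommProd (fun n => T n ^ ((h n : ℕ)))
        (fun a _ b _ _ => Commute.pow_pow (hcomm a b) _ _))
    (hindep : LinearIndependent ℂ B)
    (hspan : Submodule.span ℂ (Set.range B) = ⊤)
    (t : Fin N → ℂ) (v w : H)
    (hv : ∀ n, T n v = t n • v) (hw : ∀ n, T n w = t n • w)
    (hv0 : v ≠ 0) :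
    ∃ c : ℂ, w = c • v :=
  sov_basis_simple_joint_spectrum_general d N H T hcomm S B hB hspan t v w hv hw hv0
end

section
/- Given the Bethe-ansatz eigenvalue t_1(λ) = k_1 a(λ) Q_1(λ−η)/Q_1(λ) − d(λ)[k_2 Q_1(λ−η)Q_2(λ+η)/(Q_1(λ)Q_2(λ)) + k_3 Q_2(λ−η)/Q_2(λ)], with a(λ−η) = d(λ) = ∏_n(λ−ξ_n), and Q_1(λ)=∏_l(λ−λ_l), Q_2(λ)=∏_m(λ−μ_m) with pairwise distinct roots satisfying the Bethe equations k_1 Q_2(λ_j) a(λ_j) = k_2 d(λ_j) Q_2(λ_j+η) and k_2 Q_2(μ_j+η) Q_1(μ_j−η) = −k_3 Q_2(μ_j−η) Q_1(μ_j), then t_1 is a polynomial in λ of degree N with leading coefficient k_1 − k_2 − k_3. -/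
open scoped BigOperators
open Polynomial

/-- `d(λ) = ∏_{n=1}^N (λ - ξ_n)`. -/
noncomputable def dPoly (N : ℕ) (ξ : Fin N → ℂ) : Polynomial ℂ :=
  ∏ n, (X - Polynomial.C (ξ n))

/-- `a(λ) = d(λ+η) = ∏_{n=1}^N (λ - (ξ_n - η))`, so that `a(λ-η) = d(λ)`. -/
noncomputable def aPoly (N : ℕ) (ξ : Fin N → ℂ) (η : ℂ) : Polynomial ℂ :=
  ∏ n, (X - Polynomial.C (ξ n - η))

/-- `Q₁(λ) = ∏_{l=1}^L (λ - λ_l)`. -/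
noncomputable def Q1Poly (L : ℕ) (lam : Fin L → ℂ) : Polynomial ℂ :=
  ∏ l, (X - Polynomial.C (lam l))

/-- `Q₂(λ) = ∏_{m=1}^M (λ - μ_m)`. -/
noncomputable def Q2Poly (M : ℕ) (mu : Fin M → ℂ) : Polynomial ℂ :=
  ∏ m, (X - Polynomial.C (mu m))

/-! Clearing the denominators `Q₁(λ) Q₂(λ)` turns `t₁` into the polynomial `betheNumerator`.
The Bethe equations say precisely that this numerator vanishes at every `λ_j` and every `μ_j`;
as these points are pairwise distinct, `Q₁ Q₂` divides it. Each of its three terms is monic of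
degree `N + L + M`, so it has that degree with leading coefficient `k₁ - k₂ - k₃`, and the
quotient by the monic `Q₁ Q₂` has degree `N` and the same leading coefficient. -/

namespace Polynomial

section ProdXSubC

variable {R ι κ : Type*} [Fintype ι] [Fintype κ]

lemma isMonicOfDegree_prod_X_sub_C [CommRing R] [Nontrivial R] (c : ι → R) :
    IsMonicOfDegree (∏ i, (X - C (c i))) (Fintype.card ι) :=
  ⟨natDegree_finsetProd_X_sub_C_eq_card _ _, monic_prod_X_sub_C _ _⟩

lemma isRoot_prod_X_sub_C_self [CommRing R] (c : ι → R) (i : ι) :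
    (∏ j, (X - C (c j))).IsRoot (c i) := by
  simp only [IsRoot, eval_prod, eval_sub, eval_X, eval_C]
  exact Finset.prod_eq_zero (Finset.mem_univ i) (sub_self _)

lemma prod_X_sub_C_dvd_of_isRoot [Field R] {c : ι → R} (hc : Function.Injective c) {p : R[X]}
    (hp : ∀ i, p.IsRoot (c i)) : ∏ i, (X - C (c i)) ∣ p :=
  Finset.prod_dvd_of_coprime ((pairwise_coprime_X_sub_C hc).set_pairwise _)
    fun i _ => dvd_iff_isRoot.mpr (hp i)

lemma isCoprime_prod_X_sub_C [Field R] {a : ι → R} {b : κ → R} (hab : ∀ i j, a i ≠ b j) :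
    IsCoprime (∏ i, (X - C (a i))) (∏ j, (X - C (b j))) :=
  IsCoprime.prod_left fun i _ => IsCoprime.prod_right fun j _ =>
    isCoprime_X_sub_C_of_isUnit_sub (sub_ne_zero.mpr (hab i j)).isUnit

end ProdXSubC

section MonicOfDegree

variable {R : Type*} [CommRing R] {p q r : R[X]} {n : ℕ}

lemma IsMonicOfDegree.comp_X_sub_C [Nontrivial R] (hp : IsMonicOfDegree p n) (a : R) :
    IsMonicOfDegree (p.comp (X - C a)) n := by
  simpa using hp.comp one_ne_zero (isMonicOfDegree_X_sub_one a)

lemma IsMonicOfDegree.comp_X_add_C [Nontrivial R] (hp : IsMonicOfDegree p n) (a : R) :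
    IsMonicOfDegree (p.comp (X + C a)) n := by
  simpa using hp.comp one_ne_zero (isMonicOfDegree_X_add_one a)

lemma IsMonicOfDegree.degree_eq_of_natDegree_mul_eq {m : ℕ} (hp : IsMonicOfDegree p m)
    (hq : q ≠ 0) (h : (p * q).natDegree = m + n) : q.degree = n := by
  rw [hp.monic.natDegree_mul' hq, hp.natDegree_eq] at h
  rw [degree_eq_natDegree hq]
  exact_mod_cast Nat.add_left_cancel h

variable {a b c : R}

lemma coeff_C_mul_sub_C_mul_sub_C_mul (hp : IsMonicOfDegree p n) (hq : IsMonicOfDegree q n)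
    (hr : IsMonicOfDegree r n) :
    (C a * p - C b * q - C c * r).coeff n = a - b - c := by
  have hone {s : R[X]} (hs : IsMonicOfDegree s n) : s.coeff n = 1 :=
    hs.natDegree_eq ▸ hs.monic.coeff_natDegree
  simp only [coeff_sub, coeff_C_mul, hone hp, hone hq, hone hr, mul_one]

lemma natDegree_C_mul_sub_C_mul_sub_C_mul (hp : IsMonicOfDegree p n) (hq : IsMonicOfDegree q n)
    (hr : IsMonicOfDegree r n) (habc : a - b - c ≠ 0) :
    (C a * p - C b * q - C c * r).natDegree = n := by
  refine natDegree_eq_of_le_of_coeff_ne_zero ?_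
    (by rwa [coeff_C_mul_sub_C_mul_sub_C_mul hp hq hr])
  have hle {s : R[X]} (d : R) (hs : IsMonicOfDegree s n) : (C d * s).natDegree ≤ n :=
    (natDegree_C_mul_le _ _).trans hs.natDegree_eq.le
  exact (natDegree_sub_le _ _).trans <|
    max_le ((natDegree_sub_le _ _).trans (max_le (hle a hp) (hle b hq))) (hle c hr)

lemma leadingCoeff_C_mul_sub_C_mul_sub_C_mul (hp : IsMonicOfDegree p n) (hq : IsMonicOfDegree q n)
    (hr : IsMonicOfDegree r n) (habc : a - b - c ≠ 0) :
    (C a * p - C b * q - C c * r).leadingCoeff = a - b - c := by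
  rw [leadingCoeff, natDegree_C_mul_sub_C_mul_sub_C_mul hp hq hr habc,
    coeff_C_mul_sub_C_mul_sub_C_mul hp hq hr]

end MonicOfDegree

end Polynomial

section BetheAnsatz

variable {N L M : ℕ} (ξ : Fin N → ℂ) (η k1 k2 k3 : ℂ) (lam : Fin L → ℂ) (mu : Fin M → ℂ)

lemma isMonicOfDegree_dPoly : IsMonicOfDegree (dPoly N ξ) N := by
  rw [dPoly]
  simpa only [Fintype.card_fin] using isMonicOfDegree_prod_X_sub_C ξ

lemma isMonicOfDegree_aPoly : IsMonicOfDegree (aPoly N ξ η) N := by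
  rw [aPoly]
  simpa only [Fintype.card_fin] using isMonicOfDegree_prod_X_sub_C (ξ · - η)

lemma isMonicOfDegree_Q1Poly : IsMonicOfDegree (Q1Poly L lam) L := by
  rw [Q1Poly]
  simpa only [Fintype.card_fin] using isMonicOfDegree_prod_X_sub_C lam

lemma isMonicOfDegree_Q2Poly : IsMonicOfDegree (Q2Poly M mu) M := by
  rw [Q2Poly]
  simpa only [Fintype.card_fin] using isMonicOfDegree_prod_X_sub_C mu

/-- `t₁ Q₁ Q₂`, with the shifts `Q(λ ∓ η)` written as `Q.comp (X ∓ C η)`. -/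
noncomputable def betheNumerator : ℂ[X] :=
  C k1 * (aPoly N ξ η * (Q1Poly L lam).comp (X - C η) * Q2Poly M mu) -
    C k2 * (dPoly N ξ * (Q1Poly L lam).comp (X - C η) * (Q2Poly M mu).comp (X + C η)) -
    C k3 * (dPoly N ξ * (Q2Poly M mu).comp (X - C η) * Q1Poly L lam)

lemma eval_betheNumerator (x : ℂ) :
    (betheNumerator ξ η k1 k2 k3 lam mu).eval x =
      k1 * (aPoly N ξ η).eval x * (Q1Poly L lam).eval (x - η) * (Q2Poly M mu).eval x -
        (dPoly N ξ).eval x *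
          (k2 * (Q1Poly L lam).eval (x - η) * (Q2Poly M mu).eval (x + η) +
            k3 * (Q2Poly M mu).eval (x - η) * (Q1Poly L lam).eval x) := by
  simp only [betheNumerator, eval_sub, eval_mul, eval_C, eval_comp, eval_X, eval_add]
  ring

variable {ξ η k1 k2 k3 lam mu}

lemma Q1Poly_dvd_betheNumerator (hlam : Function.Injective lam)
    (hBethe1 : ∀ j, k1 * (Q2Poly M mu).eval (lam j) * (aPoly N ξ η).eval (lam j) =
      k2 * (dPoly N ξ).eval (lam j) * (Q2Poly M mu).eval (lam j + η)) :
    Q1Poly L lam ∣ betheNumerator ξ η k1 k2 k3 lam mu := by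
  refine prod_X_sub_C_dvd_of_isRoot hlam fun j => ?_
  have hQ1 : (Q1Poly L lam).eval (lam j) = 0 := isRoot_prod_X_sub_C_self lam j
  rw [IsRoot, eval_betheNumerator, hQ1]
  linear_combination (Q1Poly L lam).eval (lam j - η) * hBethe1 j

lemma Q2Poly_dvd_betheNumerator (hmu : Function.Injective mu)
    (hBethe2 : ∀ j, k2 * (Q2Poly M mu).eval (mu j + η) * (Q1Poly L lam).eval (mu j - η) =
      - k3 * (Q2Poly M mu).eval (mu j - η) * (Q1Poly L lam).eval (mu j)) :
    Q2Poly M mu ∣ betheNumerator ξ η k1 k2 k3 lam mu := by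
  refine prod_X_sub_C_dvd_of_isRoot hmu fun j => ?_
  have hQ2 : (Q2Poly M mu).eval (mu j) = 0 := isRoot_prod_X_sub_C_self mu j
  rw [IsRoot, eval_betheNumerator, hQ2]
  linear_combination -(dPoly N ξ).eval (mu j) * hBethe2 j

lemma Q1Poly_mul_Q2Poly_dvd_betheNumerator (hlam : Function.Injective lam)
    (hmu : Function.Injective mu) (hlm : ∀ l m, lam l ≠ mu m)
    (hBethe1 : ∀ j, k1 * (Q2Poly M mu).eval (lam j) * (aPoly N ξ η).eval (lam j) =
      k2 * (dPoly N ξ).eval (lam j) * (Q2Poly M mu).eval (lam j + η))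
    (hBethe2 : ∀ j, k2 * (Q2Poly M mu).eval (mu j + η) * (Q1Poly L lam).eval (mu j - η) =
      - k3 * (Q2Poly M mu).eval (mu j - η) * (Q1Poly L lam).eval (mu j)) :
    Q1Poly L lam * Q2Poly M mu ∣ betheNumerator ξ η k1 k2 k3 lam mu :=
  (isCoprime_prod_X_sub_C hlm).mul_dvd (Q1Poly_dvd_betheNumerator hlam hBethe1)
    (Q2Poly_dvd_betheNumerator hmu hBethe2)

variable (ξ η lam mu)

lemma isMonicOfDegree_betheNumerator_terms :
    IsMonicOfDegree (aPoly N ξ η * (Q1Poly L lam).comp (X - C η) * Q2Poly M mu) (N + L + M) ∧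
      IsMonicOfDegree (dPoly N ξ * (Q1Poly L lam).comp (X - C η) * (Q2Poly M mu).comp (X + C η))
        (N + L + M) ∧
      IsMonicOfDegree (dPoly N ξ * (Q2Poly M mu).comp (X - C η) * Q1Poly L lam) (N + L + M) := by
  have hQ1 := isMonicOfDegree_Q1Poly lam
  have hQ2 := isMonicOfDegree_Q2Poly mu
  refine ⟨((isMonicOfDegree_aPoly ξ η).mul (hQ1.comp_X_sub_C η)).mul hQ2,
    ((isMonicOfDegree_dPoly ξ).mul (hQ1.comp_X_sub_C η)).mul (hQ2.comp_X_add_C η), ?_⟩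
  rw [add_right_comm]
  exact ((isMonicOfDegree_dPoly ξ).mul (hQ2.comp_X_sub_C η)).mul hQ1

lemma natDegree_betheNumerator (hlead : k1 - k2 - k3 ≠ 0) :
    (betheNumerator ξ η k1 k2 k3 lam mu).natDegree = N + L + M :=
  let ⟨hp, hq, hr⟩ := isMonicOfDegree_betheNumerator_terms ξ η lam mu
  natDegree_C_mul_sub_C_mul_sub_C_mul hp hq hr hlead

lemma leadingCoeff_betheNumerator (hlead : k1 - k2 - k3 ≠ 0) :
    (betheNumerator ξ η k1 k2 k3 lam mu).leadingCoeff = k1 - k2 - k3 :=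
  let ⟨hp, hq, hr⟩ := isMonicOfDegree_betheNumerator_terms ξ η lam mu
  leadingCoeff_C_mul_sub_C_mul_sub_C_mul hp hq hr hlead

end BetheAnsatz

/-- Given pairwise distinct Bethe roots `λ_1,…,λ_L`, `μ_1,…,μ_M` satisfying the Bethe
equations, the Bethe-ansatz expression
`t₁(λ) = k₁ a(λ) Q₁(λ-η)/Q₁(λ) - d(λ)[k₂ Q₁(λ-η)Q₂(λ+η)/(Q₁(λ)Q₂(λ)) + k₃ Q₂(λ-η)/Q₂(λ)]`
is (the evaluation of) a polynomial of degree `N` with leading coefficient `k₁-k₂-k₃`. -/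
theorem bethe_ansatz_eigenvalue_polynomial (N L M : ℕ) (ξ : Fin N → ℂ) (η k1 k2 k3 : ℂ)
    (lam : Fin L → ℂ) (mu : Fin M → ℂ)
    (hlam : Function.Injective lam) (hmu : Function.Injective mu)
    (hlm : ∀ l m, lam l ≠ mu m)
    (hlead : k1 - k2 - k3 ≠ 0)
    (hBethe1 : ∀ j, k1 * (Q2Poly M mu).eval (lam j) * (aPoly N ξ η).eval (lam j) =
      k2 * (dPoly N ξ).eval (lam j) * (Q2Poly M mu).eval (lam j + η))
    (hBethe2 : ∀ j, k2 * (Q2Poly M mu).eval (mu j + η) * (Q1Poly L lam).eval (mu j - η) =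
      - k3 * (Q2Poly M mu).eval (mu j - η) * (Q1Poly L lam).eval (mu j)) :
    ∃ t1 : Polynomial ℂ, t1.degree = (N : WithBot ℕ) ∧
      t1.leadingCoeff = k1 - k2 - k3 ∧
      ∀ x : ℂ, t1.eval x * ((Q1Poly L lam).eval x * (Q2Poly M mu).eval x) =
        k1 * (aPoly N ξ η).eval x * (Q1Poly L lam).eval (x - η) * (Q2Poly M mu).eval x -
          (dPoly N ξ).eval x *
            (k2 * (Q1Poly L lam).eval (x - η) * (Q2Poly M mu).eval (x + η) +
              k3 * (Q2Poly M mu).eval (x - η) * (Q1Poly L lam).eval x) := by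
  obtain ⟨t1, ht1⟩ := Q1Poly_mul_Q2Poly_dvd_betheNumerator hlam hmu hlm hBethe1 hBethe2
  have hden := (isMonicOfDegree_Q1Poly lam).mul (isMonicOfDegree_Q2Poly mu)
  have hlc : t1.leadingCoeff = k1 - k2 - k3 := by
    rw [← leadingCoeff_monic_mul hden.monic, ← ht1,
      leadingCoeff_betheNumerator ξ η lam mu hlead]
  have ht1_ne : t1 ≠ 0 := leadingCoeff_ne_zero.mp (hlc ▸ hlead)
  have hdeg : (Q1Poly L lam * Q2Poly M mu * t1).natDegree = L + M + N := by
    rw [← ht1, natDegree_betheNumerator ξ η lam mu hlead]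
    ring
  refine ⟨t1, hden.degree_eq_of_natDegree_mul_eq ht1_ne hdeg, hlc, fun x => ?_⟩
  rw [← eval_mul, ← eval_mul, mul_comm, ← ht1, eval_betheNumerator]
end
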